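/- arXiv:2205.07695 — 2 statements merged into one kernel-verified Lean document; each statement's English description precedes it below -/
import Mathlib

section
/- Let s be an element of a unital C*-algebra with -1 < Im s < 1 (i.e., 1 + Im s and 1 - Im s are both positive and invertible). Then s+i and s-i are invertible, with ‖(s+i)⁻¹‖ ≤ ‖(1+Im s)⁻¹‖ and ‖(s-i)⁻¹‖ ≤ ‖(1-Im s)⁻¹‖. -/
/-!
Write `s = a + i m` with `a = Re s` and `m = Im s` selfadjoint, so that `s + i = a + i b` with
`b = 1 + m` strictly positive. Writing `b = c²` with `c` selfadjoint and invertible gives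
`a + i b = c (x + i) c` with `x = c⁻¹ a c⁻¹` selfadjoint. Since the spectrum of `x` is real,
`x + i` is invertible, and `(x + i)* (x + i) = 1 + x² ≥ 1` gives `‖(x + i)⁻¹‖ ≤ 1`; hence
`‖(s + i)⁻¹‖ ≤ ‖c⁻¹‖² = ‖b⁻¹‖`. The bound for `s - i` is the bound for `s* + i`, since
`Im s* = -Im s`.
-/

open Complex

/-- The imaginary part `Im s = (s - s*)/(2i)` of an element of a complex star algebra. -/
noncomputable def imPart {A : Type*} [Ring A] [StarRing A] [Module ℂ A] (s : A) : A :=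
  ((2 * Complex.I)⁻¹ : ℂ) • (s - star s)

open scoped Ring ComplexStarModule

lemma imPart_eq_imaginaryPart {A : Type*} [Ring A] [StarRing A] [Algebra ℂ A] [StarModule ℂ A]
    (s : A) : imPart s = ℑ s := by
  rw [imPart, imaginaryPart_apply_coe, smul_comm, ← Complex.coe_smul, smul_smul]
  norm_num [mul_comm]

lemma imPart_star {A : Type*} [Ring A] [StarRing A] [Module ℂ A] (s : A) :
    imPart (star s) = -imPart s := by
  rw [imPart, imPart, star_star, ← smul_neg, neg_sub]

lemma Ring.inverse_mul_mul_of_isUnit {M₀ : Type*} [MonoidWithZero M₀] {c y : M₀}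
    (hc : IsUnit c) : (c * y * c)⁻¹ʳ = c⁻¹ʳ * y⁻¹ʳ * c⁻¹ʳ := by
  rw [Ring.inverse_mul (.inr hc), Ring.inverse_mul (.inl hc), mul_assoc]

lemma add_I_smul_mul_self_eq {A : Type*} [Ring A] [Algebra ℂ A] {a c : A} (hc : IsUnit c) :
    a + I • (c * c) = c * (c⁻¹ʳ * a * c⁻¹ʳ + I • 1) * c := by
  simp only [mul_add, add_mul, mul_smul_comm, smul_mul_assoc, mul_one, ← mul_assoc,
    Ring.mul_inverse_cancel _ hc, one_mul, Ring.inverse_mul_cancel_right _ _ hc]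

lemma IsSelfAdjoint.star_add_I_smul_one_mul_self {A : Type*} [Ring A] [StarRing A] [Algebra ℂ A]
    [StarModule ℂ A] {x : A} (hx : IsSelfAdjoint x) :
    star (x + I • (1 : A)) * (x + I • (1 : A)) = 1 + x * x := by
  simp only [star_add, star_smul, hx.star_eq, star_one, Complex.star_def, Complex.conj_I,
    add_mul, mul_add, smul_mul_assoc, mul_smul_comm, one_mul, mul_one, smul_add, smul_smul]
  simp only [mul_neg, I_mul_I, neg_neg, one_smul, neg_smul]
  abel

namespace CStarAlgebra

lemma isUnit_add_I_smul_one {A : Type*} [CStarAlgebra A] {x : A} (hx : IsSelfAdjoint x) :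
    IsUnit (x + I • (1 : A)) := by
  have h : -I ∉ spectrum ℂ x := fun h => by simpa using hx.im_eq_zero_of_mem_spectrum h
  simpa [Algebra.algebraMap_eq_smul_one, sub_eq_add_neg] using (spectrum.notMem_iff.mp h).neg

variable {A : Type*} [CStarAlgebra A] [PartialOrder A] [StarOrderedRing A]

lemma norm_ringInverse_le_one_of_one_le_star_mul_self {t : A} (ht : IsUnit t)
    (h : 1 ≤ star t * t) : ‖t⁻¹ʳ‖ ≤ 1 := by
  obtain ⟨v, hv⟩ : IsUnit (star t * t) := ht.star.mul ht
  have hv_inv : (star t * t)⁻¹ʳ = t⁻¹ʳ * star t⁻¹ʳ := by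
    rw [Ring.inverse_mul (.inr ht), Ring.inverse_star]
  have h1v : (1 : A) ≤ v := hv ▸ h
  have hnorm : ‖(↑v⁻¹ : A)‖ ≤ 1 := (norm_le_one_iff_of_nonneg _
    (CFC.inv_nonneg_of_nonneg _ (zero_le_one.trans h1v))).mpr (inv_le_one h1v)
  rw [← Ring.inverse_unit, hv, hv_inv, CStarRing.norm_self_mul_star] at hnorm
  nlinarith [norm_nonneg t⁻¹ʳ]

lemma norm_ringInverse_add_I_smul_one_le_one {x : A} (hx : IsSelfAdjoint x) :
    ‖(x + I • (1 : A))⁻¹ʳ‖ ≤ 1 := by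
  refine norm_ringInverse_le_one_of_one_le_star_mul_self (isUnit_add_I_smul_one hx) ?_
  rw [hx.star_add_I_smul_one_mul_self, le_add_iff_nonneg_right]
  simpa [hx.star_eq] using star_mul_self_nonneg x

lemma isUnit_add_I_smul_and_norm_ringInverse_le {a b : A} (ha : IsSelfAdjoint a)
    (hb : IsStrictlyPositive b) : IsUnit (a + I • b) ∧ ‖(a + I • b)⁻¹ʳ‖ ≤ ‖b⁻¹ʳ‖ := by
  obtain ⟨c, hcu, hc, rfl⟩ :=
    isStrictlyPositive_iff_exists_isUnit_and_isSelfAdjoint_and_eq_mul_self.mp hb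
  set d := c⁻¹ʳ
  have hd : IsSelfAdjoint d := by rw [IsSelfAdjoint, ← Ring.inverse_star, hc.star_eq]
  have hx : IsSelfAdjoint (d * a * d) := ha.conjugate_self hd
  rw [add_I_smul_mul_self_eq hcu, Ring.inverse_mul_mul_of_isUnit hcu, Ring.inverse_mul (.inl hcu)]
  refine ⟨(hcu.mul (isUnit_add_I_smul_one hx)).mul hcu, ?_⟩
  calc ‖d * (d * a * d + I • 1)⁻¹ʳ * d‖ ≤ ‖d‖ * ‖(d * a * d + I • 1)⁻¹ʳ‖ * ‖d‖ := norm_mul₃_le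
    _ ≤ ‖d‖ * 1 * ‖d‖ := by gcongr; exact norm_ringInverse_add_I_smul_one_le_one hx
    _ = ‖d * d‖ := by rw [mul_one, hd.norm_mul_self, sq]

lemma isUnit_add_I_smul_one_and_norm_ringInverse_le (s : A)
    (hs : IsStrictlyPositive (1 + imPart s)) :
    IsUnit (s + I • (1 : A)) ∧ ‖(s + I • (1 : A))⁻¹ʳ‖ ≤ ‖(1 + imPart s)⁻¹ʳ‖ := by
  have hs_eq : s + I • (1 : A) = ℜ s + I • (1 + imPart s) := by
    rw [imPart_eq_imaginaryPart, smul_add, add_left_comm, realPart_add_I_smul_imaginaryPart,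
      add_comm]
  rw [hs_eq]
  exact isUnit_add_I_smul_and_norm_ringInverse_le (ℜ s).2 hs

end CStarAlgebra

/-- If `s` is an element of a unital C*-algebra with `-1 < Im s < 1` (meaning that
`1 + Im s` and `1 - Im s` are positive and invertible), then `s + i` and `s - i` are
invertible with `‖(s+i)⁻¹‖ ≤ ‖(1+Im s)⁻¹‖` and `‖(s-i)⁻¹‖ ≤ ‖(1-Im s)⁻¹‖`. -/
theorem resolvent_bound_of_imPart
    {A : Type*} [NormedRing A] [StarRing A] [CStarRing A] [NormedAlgebra ℂ A]
    [CompleteSpace A] [StarModule ℂ A] [PartialOrder A] [StarOrderedRing A]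
    (s : A)
    (h₁pos : 0 ≤ (1 : A) + imPart s) (h₁ : IsUnit ((1 : A) + imPart s))
    (h₂pos : 0 ≤ (1 : A) - imPart s) (h₂ : IsUnit ((1 : A) - imPart s)) :
    IsUnit (s + Complex.I • (1 : A)) ∧ IsUnit (s - Complex.I • (1 : A)) ∧
    ‖Ring.inverse (s + Complex.I • (1 : A))‖ ≤ ‖Ring.inverse ((1 : A) + imPart s)‖ ∧
    ‖Ring.inverse (s - Complex.I • (1 : A))‖ ≤ ‖Ring.inverse ((1 : A) - imPart s)‖ := by
  let : CStarAlgebra A := {}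
  obtain ⟨hu₁, hn₁⟩ :=
    CStarAlgebra.isUnit_add_I_smul_one_and_norm_ringInverse_le s (h₁.isStrictlyPositive h₁pos)
  have hstar : star s + I • (1 : A) = star (s - I • 1) := by simp [sub_eq_add_neg]
  obtain ⟨hu₂, hn₂⟩ := CStarAlgebra.isUnit_add_I_smul_one_and_norm_ringInverse_le (star s)
    (by rw [imPart_star, ← sub_eq_add_neg]; exact h₂.isStrictlyPositive h₂pos)
  rw [hstar, isUnit_star] at hu₂
  rw [hstar, Ring.inverse_star, norm_star, imPart_star, ← sub_eq_add_neg] at hn₂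
  exact ⟨hu₁, hu₂, hn₁, hn₂⟩
end

section
/- For a self-adjoint element Z of a unital C*-algebra and ε ∈ {1,-1}, the Bochner integral identity (Z + εi)(Z - εi)⁻¹ = 1 - 2·∫_{-∞}^{0} e^{(iεZ+1)y} dy holds, where e^{(iεZ+1)y} = e^y·e^{iεZy}. -/
/-!
Write `μ = iε`, so that `μ² = -1` and `B := μZ + 1 = μ(Z - μ)`. Since `Z` is self-adjoint, `μ` is
not in its spectrum, so `B` is invertible, and the Cayley transform is pure algebra:
`(Z + μ)(Z - μ)⁻¹ = 1 + 2μ(Z - μ)⁻¹ = 1 - 2B⁻¹`. Finally `e^{yB} = e^y e^{yμZ}` with `e^{yμZ}`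
unitary, so `‖e^{yB}‖ ≤ e^y`; hence `y ↦ e^{yB}` is integrable on `(-∞, 0]` and, being the
derivative of `y ↦ e^{yB} B⁻¹`, integrates to `B⁻¹`.
-/

open Complex MeasureTheory Filter Topology

section CayleyAlgebra

variable {𝕜 A : Type*} [Field 𝕜] [Ring A] [Algebra 𝕜 A] {μ : 𝕜}

lemma smul_add_one_eq_smul_sub_smul_one (hμ : μ * μ = -1) (Z : A) :
    μ • Z + 1 = μ • (Z - μ • 1) := by
  rw [smul_sub, smul_smul, hμ, neg_smul, one_smul, sub_neg_eq_add]

variable {Z : A}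

lemma isUnit_smul_add_one (hμ : μ * μ = -1) (hZ : IsUnit (Z - μ • 1)) : IsUnit (μ • Z + 1) := by
  have hμ₀ : μ ≠ 0 := by rintro rfl; simp at hμ
  rw [smul_add_one_eq_smul_sub_smul_one hμ, Algebra.smul_def]
  exact ((isUnit_iff_ne_zero.mpr hμ₀).map (algebraMap 𝕜 A)).mul hZ

lemma inverse_smul_add_one (hμ : μ * μ = -1) (hZ : IsUnit (Z - μ • 1)) :
    Ring.inverse (μ • Z + 1) = (-μ) • Ring.inverse (Z - μ • 1) := by
  rw [← Ring.inverse_mul_cancel_left _ ((-μ) • Ring.inverse (Z - μ • 1))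
    (isUnit_smul_add_one hμ hZ), smul_add_one_eq_smul_sub_smul_one hμ, smul_mul_smul_comm,
    Ring.mul_inverse_cancel _ hZ, mul_neg, hμ, neg_neg, one_smul, mul_one]

lemma add_smul_one_mul_inverse_sub_smul_one (hμ : μ * μ = -1) (hZ : IsUnit (Z - μ • 1)) :
    (Z + μ • 1) * Ring.inverse (Z - μ • 1) = 1 - (2 : 𝕜) • Ring.inverse (μ • Z + 1) := by
  have hsplit : Z + μ • 1 = (Z - μ • 1) + (2 * μ) • 1 := by
    rw [two_mul, add_smul]; abel
  rw [inverse_smul_add_one hμ hZ, hsplit, add_mul, Ring.mul_inverse_cancel _ hZ, smul_mul_assoc,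
    one_mul, smul_smul, mul_neg, neg_smul, sub_neg_eq_add]

end CayleyAlgebra

lemma integral_Iic_exp_smul {A : Type*} [NormedRing A] [NormedAlgebra ℝ A] [CompleteSpace A]
    {B : A} (hB : IsUnit B) {C c : ℝ} (hc : 0 < c)
    (hbound : ∀ t ≤ 0, ‖NormedSpace.exp (t • B)‖ ≤ C * Real.exp (c * t)) :
    ∫ t in Set.Iic (0 : ℝ), NormedSpace.exp (t • B) = Ring.inverse B := by
  let +nondep : NormedAlgebra ℚ A := .restrictScalars ℚ ℝ A
  have hderiv : ∀ t ∈ Set.Iic (0 : ℝ),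
      HasDerivAt (fun s : ℝ ↦ NormedSpace.exp (s • B) * Ring.inverse B)
        (NormedSpace.exp (t • B)) t := fun t _ ↦ by
    simpa only [mul_assoc, Ring.mul_inverse_cancel _ hB, mul_one] using
      (hasDerivAt_exp_smul_const B t).mul_const (Ring.inverse B)
  have hcont : Continuous fun t : ℝ ↦ NormedSpace.exp (t • B) :=
    NormedSpace.exp_continuous.comp (continuous_id.smul continuous_const)
  have hint : IntegrableOn (fun t : ℝ ↦ NormedSpace.exp (t • B)) (Set.Iic 0) :=
    ((integrableOn_exp_mul_Iic hc 0).const_mul C).mono' hcont.aestronglyMeasurable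
      ((ae_restrict_mem measurableSet_Iic).mono hbound)
  have hdecay : Tendsto (fun t : ℝ ↦ NormedSpace.exp (t • B) * Ring.inverse B) atBot (𝓝 0) := by
    have hexp : Tendsto (fun t ↦ C * Real.exp (c * t) * ‖Ring.inverse B‖) atBot (𝓝 0) := by
      simpa using ((Real.tendsto_exp_atBot.comp (tendsto_id.const_mul_atBot hc)).const_mul
        C).mul_const ‖Ring.inverse B‖
    refine squeeze_zero_norm' ?_ hexp
    filter_upwards [eventually_le_atBot 0] with t ht
    exact (norm_mul_le _ _).trans (by gcongr; exact hbound t ht)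
  rw [integral_Iic_of_hasDerivAt_of_tendsto' hderiv hint hdecay, zero_smul,
    NormedSpace.exp_zero, one_mul, sub_zero]

section CStarAlgebra

variable {A : Type*} [CStarAlgebra A]

lemma IsSelfAdjoint.isUnit_sub_smul_one {Z : A} (hZ : IsSelfAdjoint Z) {z : ℂ} (hz : z.im ≠ 0) :
    IsUnit (Z - z • 1) := by
  have hz' : z ∉ spectrum ℂ Z := fun hmem ↦ hz <| by
    rw [hZ.mem_spectrum_eq_re hmem, ofReal_im]
  rw [spectrum.notMem_iff, Algebra.algebraMap_eq_smul_one] at hz'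
  simpa using hz'.neg

lemma norm_exp_smul_add_one_le {S : A} (hS : S ∈ skewAdjoint A) (t : ℝ) :
    ‖NormedSpace.exp (t • (S + 1))‖ ≤ Real.exp t := by
  rcases subsingleton_or_nontrivial A with hA | hA
  · simp [Subsingleton.elim _ (0 : A), (Real.exp_pos t).le]
  let +nondep : NormedAlgebra ℚ A := .restrictScalars ℚ ℂ A
  have hu : NormedSpace.exp (t • S) ∈ unitary A :=
    NormedSpace.exp_mem_unitary_of_mem_skewAdjoint (skewAdjoint.smul_mem t hS)
  have hscalar : NormedSpace.exp (t • (1 : A)) = algebraMap ℝ A (Real.exp t) := by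
    rw [← Algebra.algebraMap_eq_smul_one, Real.exp_eq_exp_ℝ, NormedSpace.algebraMap_exp_comm]
  rw [smul_add, NormedSpace.exp_add_of_commute ((Commute.one_right S).smul_left t |>.smul_right t),
    hscalar, CStarRing.norm_mem_unitary_mul _ hu, norm_algebraMap',
    Real.norm_of_nonneg (Real.exp_pos t).le]

end CStarAlgebra

/-- For a selfadjoint element `Z` of a unital C*-algebra and `ε ∈ {±1}`,
`(Z+εi)(Z-εi)⁻¹ = 1 - 2·∫_{-∞}^0 e^{(iεZ+1)y} dy` (Bochner integral),
where `e^{(iεZ+1)y} = e^y·e^{iεZy}`. -/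
theorem cayley_exp_integral
    {A : Type*} [NormedRing A] [StarRing A] [CStarRing A] [NormedAlgebra ℂ A]
    [CompleteSpace A] [StarModule ℂ A]
    (Z : A) (hZ : IsSelfAdjoint Z) (ε : ℂ) (hε : ε = 1 ∨ ε = -1) :
    IsUnit (Z - (ε * Complex.I) • (1 : A)) ∧
    (Z + (ε * Complex.I) • (1 : A)) * Ring.inverse (Z - (ε * Complex.I) • (1 : A)) =
      (1 : A) - (2 : ℂ) •
        ∫ y in Set.Iic (0 : ℝ),
          NormedSpace.exp (((y : ℂ)) • ((Complex.I * ε) • Z + 1)) := by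
  let : CStarAlgebra A := ⟨⟩
  rw [mul_comm ε I]
  have hμ : I * ε * (I * ε) = -1 := by rcases hε with rfl | rfl <;> simp
  have hunit : IsUnit (Z - (I * ε) • 1) :=
    hZ.isUnit_sub_smul_one (by rcases hε with rfl | rfl <;> simp)
  have hskew : (I * ε) • Z ∈ skewAdjoint A :=
    hZ.smul_mem_skewAdjoint (by rcases hε with rfl | rfl <;> simp [skewAdjoint.mem_iff])
  have hbound (t : ℝ) (_ : t ≤ 0) :
      ‖NormedSpace.exp (t • ((I * ε) • Z + 1))‖ ≤ 1 * Real.exp (1 * t) := by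
    simpa using norm_exp_smul_add_one_le hskew t
  refine ⟨hunit, ?_⟩
  simp only [Complex.coe_smul]
  rw [integral_Iic_exp_smul (isUnit_smul_add_one hμ hunit) one_pos hbound,
    add_smul_one_mul_inverse_sub_smul_one hμ hunit]
end
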